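/- Differential privacy of layered circuits with global depolarizing noise: let A = D_{p_n} ∘ C_n ∘ ⋯ ∘ D_{p_1} ∘ C_1, where each C_i is a quantum channel on a D-dimensional system and D_{p_i} is the depolarizing channel with parameter 0 ≤ p_i ≤ 1, and set p⋆ := 1 − ∏_{i=1}^n (1 − p_i). Then for any ε ≥ 0, κ ≥ 0 and any density operators ρ, σ with (1/2)‖ρ − σ‖₁ ≤ κ, E_{e^ε}(A(ρ)‖A(σ)) ≤ max{0, (1 − e^ε)·p⋆/D + (1 − p⋆)·κ}. -/

import Mathlib

open scoped BigOperators ComplexOrder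

/-- Trace of the positive part of a Hermitian matrix (0 if not Hermitian). -/
noncomputable def posPartTrace {n : Type*} [Fintype n] [DecidableEq n]
    (X : Matrix n n ℂ) : ℝ :=
  if h : X.IsHermitian then ∑ i, max (h.eigenvalues i) 0 else 0

/-- The quantum hockey-stick divergence `E_γ(ρ‖σ) = Tr[(ρ - γσ)₊]`. -/
noncomputable def hsDiv {n : Type*} [Fintype n] [DecidableEq n]
    (γ : ℝ) (ρ σ : Matrix n n ℂ) : ℝ :=
  posPartTrace (ρ - (γ : ℂ) • σ)

/-- A density operator: positive semidefinite with unit trace. -/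
def IsDensity {n : Type*} [Fintype n] [DecidableEq n] (ρ : Matrix n n ℂ) : Prop :=
  ρ.PosSemidef ∧ ρ.trace = 1

/-- Trace norm: the sum of the singular values. -/
noncomputable def traceNorm {n : Type*} [Fintype n] [DecidableEq n]
    (X : Matrix n n ℂ) : ℝ :=
  ∑ i, Real.sqrt ((Matrix.posSemidef_conjTranspose_mul_self X).isHermitian.eigenvalues i)

/-- Completely positive trace-preserving linear map. -/
def IsCPTP {n m : Type*} [Fintype n] [DecidableEq n] [Fintype m] [DecidableEq m]
    (Φ : Matrix n n ℂ →ₗ[ℂ] Matrix m m ℂ) : Prop :=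
  (∀ k : ℕ, ∀ X : Matrix (Fin k × n) (Fin k × n) ℂ, X.PosSemidef →
      (Matrix.of fun p q : Fin k × m =>
        Φ (Matrix.of fun i j => X (p.1, i) (q.1, j)) p.2 q.2).PosSemidef) ∧
  (∀ X, (Φ X).trace = X.trace)

/-- Contraction coefficient of a channel for the hockey-stick divergence. -/
noncomputable def contractionCoeff {n : Type*} [Fintype n] [DecidableEq n]
    (γ : ℝ) (Φ : Matrix n n ℂ →ₗ[ℂ] Matrix n n ℂ) : ℝ :=
  sSup {x : ℝ | ∃ ρ σ : Matrix n n ℂ, IsDensity ρ ∧ IsDensity σ ∧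
    0 < hsDiv γ ρ σ ∧ x = hsDiv γ (Φ ρ) (Φ σ) / hsDiv γ ρ σ}

/-- The depolarizing channel `D_p(ρ) = (1-p)ρ + p Tr(ρ) I/D` on a `D`-dimensional system. -/
noncomputable def depol (D : ℕ) (p : ℝ) :
    Matrix (Fin D) (Fin D) ℂ →ₗ[ℂ] Matrix (Fin D) (Fin D) ℂ where
  toFun ρ := (1 - (p : ℂ)) • ρ + (((p : ℂ) / D) * ρ.trace) • (1 : Matrix (Fin D) (Fin D) ℂ)
  map_add' X Y := by
    simp [Matrix.trace_add, mul_add, add_smul]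
    abel
  map_smul' c X := by
    simp [Matrix.trace_smul, smul_smul, smul_add]
    ring_nf

/-- The noisy layered algorithm `A = D_{p_n} ∘ C_n ∘ ⋯ ∘ D_{p_1} ∘ C_1` with global
depolarizing noise after each layer. -/
noncomputable def depolLayered (D n : ℕ) (p : Fin n → ℝ)
    (C : Fin n → (Matrix (Fin D) (Fin D) ℂ →ₗ[ℂ] Matrix (Fin D) (Fin D) ℂ)) :
    Matrix (Fin D) (Fin D) ℂ →ₗ[ℂ] Matrix (Fin D) (Fin D) ℂ :=
  (List.finRange n).foldl (fun acc i => (depol D (p i) ∘ₗ C i) ∘ₗ acc) LinearMap.id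


/-! Write `E = hsDiv γ` with `γ = exp ε ≥ 1`. Since `Tr X₊` is the maximum of `Re Tr (P X)` over
`0 ≤ P ≤ 1`, a positive trace-preserving map cannot increase `E`; in particular no CPTP layer
`C i` can. The depolarizing channel sends `ρ - γσ` to `(1 - q)(ρ - γσ) - q (γ - 1)/D • 1`, and on
eigenvalues this gives `E' ≤ max 0 ((1 - q) E - q (γ - 1)/D)` for one layer. These affine bounds
compose to the claimed one with `E(ρ‖σ)` in place of `κ`, and for states
`E(ρ‖σ) ≤ E_1(ρ‖σ) = ½‖ρ - σ‖₁`. -/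

open Matrix

lemma sum_max_mul_add_le {ι : Type*} [Fintype ι] {a c : ℝ} (ha : 0 ≤ a) (hc : c ≤ 0)
    (x : ι → ℝ) : ∑ i, max (a * x i + c) 0 ≤ max 0 (a * ∑ i, max (x i) 0 + c) := by
  classical
  by_cases hpos : ∃ i₀, 0 < a * x i₀ + c
  swap
  · simp only [not_exists, not_lt] at hpos
    simp [max_eq_right (hpos _)]
  obtain ⟨i₀, hi₀⟩ := hpos
  -- `c` is charged to the positive term at `i₀`; every term is at most `a * max (x i) 0`.
  have hterm : ∀ i, max (a * x i + c) 0 ≤ a * max (x i) 0 := fun i =>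
    max_le (by nlinarith [le_max_left (x i) 0]) (by positivity)
  refine le_max_of_le_right ?_
  rw [← Finset.add_sum_erase _ _ (Finset.mem_univ i₀), Finset.mul_sum,
    ← Finset.add_sum_erase _ _ (Finset.mem_univ i₀), max_eq_left hi₀.le]
  have := Finset.sum_le_sum fun i (_ : i ∈ Finset.univ.erase i₀) => hterm i
  nlinarith [le_max_left (x i₀) 0]

lemma max_zero_mul_max_zero_add {a b c : ℝ} (ha : 0 ≤ a) (hc : c ≤ 0) :
    max 0 (a * max 0 b + c) = max 0 (a * b + c) := by
  rcases le_total 0 b with hb | hb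
  · rw [max_eq_right hb]
  · rw [max_eq_left hb, mul_zero, zero_add, max_eq_left hc,
      max_eq_left (by nlinarith : a * b + c ≤ 0)]

lemma mul_one_sub_div_nonpos {q γ : ℝ} (hq : 0 ≤ q) (hγ : 1 ≤ γ) (D : ℕ) :
    q * (1 - γ) / D ≤ 0 :=
  div_nonpos_of_nonpos_of_nonneg (mul_nonpos_of_nonneg_of_nonpos hq (by linarith))
    (Nat.cast_nonneg D)

namespace Matrix

variable {m : Type*} [Fintype m] [DecidableEq m]

/-- `d ↦ U diag(d) U⋆`, bundled as an algebra map so that sums, products and scalar multiples of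
such matrices are computed on `d`. -/
noncomputable def unitaryDiag (U : unitaryGroup m ℂ) : (m → ℝ) →ₐ[ℝ] Matrix m m ℂ :=
  (((Unitary.conjStarAlgAut ℂ _ U : Matrix m m ℂ ≃⋆ₐ[ℂ] Matrix m m ℂ) :
      Matrix m m ℂ →ₐ[ℂ] Matrix m m ℂ).restrictScalars ℝ).comp
    ((diagonalAlgHom ℝ).comp (Complex.ofRealAm.compLeft m))

lemma unitaryDiag_apply (U : unitaryGroup m ℂ) (d : m → ℝ) :
    unitaryDiag U d = U * diagonal (fun i => (d i : ℂ)) * star (U : Matrix m m ℂ) :=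
  rfl

lemma IsHermitian.eq_unitaryDiag {X : Matrix m m ℂ} (hX : X.IsHermitian) :
    X = unitaryDiag hX.eigenvectorUnitary hX.eigenvalues :=
  hX.spectral_theorem

lemma unitaryDiag_posSemidef (U : unitaryGroup m ℂ) {d : m → ℝ} (hd : 0 ≤ d) :
    (unitaryDiag U d).PosSemidef := by
  rw [unitaryDiag_apply, star_eq_conjTranspose]
  have hdiag : (diagonal fun i => (d i : ℂ)).PosSemidef :=
    posSemidef_diagonal_iff.mpr fun i => Complex.zero_le_real.mpr (hd i)
  exact hdiag.mul_mul_conjTranspose_same _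

lemma unitaryDiag_isHermitian (U : unitaryGroup m ℂ) (d : m → ℝ) :
    (unitaryDiag U d).IsHermitian := by
  rw [← sub_sub_cancel (max d 0) d, map_sub]
  exact (unitaryDiag_posSemidef U le_sup_right).isHermitian.sub
    (unitaryDiag_posSemidef U (by simp)).isHermitian

lemma trace_unitaryDiag (U : unitaryGroup m ℂ) (d : m → ℝ) :
    (unitaryDiag U d).trace = ((∑ i, d i : ℝ) : ℂ) := by
  rw [unitaryDiag_apply, trace_mul_cycle, Unitary.coe_star_mul_self, one_mul, trace_diagonal]
  push_cast
  rfl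

/-- The eigenvalues of `U diag(d) U⋆` are the `d i` up to order, as both are the roots of the
characteristic polynomial. -/
lemma sum_eigenvalues_unitaryDiag (f : ℝ → ℝ) {X : Matrix m m ℂ} (hX : X.IsHermitian)
    {U : unitaryGroup m ℂ} {d : m → ℝ} (h : X = unitaryDiag U d) :
    ∑ i, f (hX.eigenvalues i) = ∑ i, f (d i) := by
  have hroots : X.charpoly.roots = Finset.univ.val.map (RCLike.ofReal ∘ d) := by
    rw [h, unitaryDiag_apply, charpoly_mul_comm, ← mul_assoc, Unitary.coe_star_mul_self, one_mul,
      charpoly_diagonal,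
      Polynomial.roots_prod _ _ (by simp [Finset.prod_ne_zero_iff, Polynomial.X_sub_C_ne_zero])]
    simp
  have := congrArg (fun s => (s.map (f ∘ RCLike.re)).sum)
    (hX.roots_charpoly_eq_eigenvalues.symm.trans hroots)
  simpa [Multiset.map_map, Function.comp_def, Finset.sum_map_val] using this

open scoped MatrixOrder in
lemma re_trace_mul_nonneg {A B : Matrix m m ℂ} (hA : A.PosSemidef) (hB : B.PosSemidef) :
    0 ≤ (A * B).trace.re := by
  set S := CFC.sqrt B
  have hS : Sᴴ = S := (CFC.sqrt_nonneg B).posSemidef.isHermitian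
  have hSS : (A * B).trace = (Sᴴ * A * S).trace := by
    rw [hS, ← CFC.sqrt_mul_sqrt_self B hB.nonneg, ← mul_assoc, trace_mul_comm, ← mul_assoc]
  rw [hSS]
  exact (Complex.nonneg_iff.mp (hA.conjTranspose_mul_mul_same S).trace_nonneg).1

lemma re_trace_mul_le_re_trace {P A : Matrix m m ℂ} (hP : (1 - P).PosSemidef)
    (hA : A.PosSemidef) : (P * A).trace.re ≤ A.trace.re := by
  have h := re_trace_mul_nonneg hP hA
  rw [sub_mul, one_mul, trace_sub, Complex.sub_re] at h
  linarith

end Matrix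

section PosPartTrace

variable {m : Type*} [Fintype m] [DecidableEq m]

lemma posPartTrace_of_isHermitian {X : Matrix m m ℂ} (hX : X.IsHermitian) :
    posPartTrace X = ∑ i, max (hX.eigenvalues i) 0 :=
  dif_pos hX

lemma posPartTrace_unitaryDiag (U : unitaryGroup m ℂ) (d : m → ℝ) :
    posPartTrace (unitaryDiag U d) = ∑ i, max (d i) 0 := by
  rw [posPartTrace_of_isHermitian (unitaryDiag_isHermitian U d)]
  exact sum_eigenvalues_unitaryDiag (max · 0) _ rfl

/-- The spectral projection onto the nonnegative eigenvalues attains `posPartTrace`. -/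
lemma exists_re_trace_mul_eq_posPartTrace {X : Matrix m m ℂ} (hX : X.IsHermitian) :
    ∃ P : Matrix m m ℂ, P.PosSemidef ∧ (1 - P).PosSemidef ∧
      (P * X).trace.re = posPartTrace X := by
  set U := hX.eigenvectorUnitary
  set e : m → ℝ := fun i => if 0 ≤ hX.eigenvalues i then 1 else 0
  refine ⟨unitaryDiag U e, unitaryDiag_posSemidef U fun i => by positivity, ?_, ?_⟩
  · rw [← map_one (unitaryDiag U), ← map_sub]
    exact unitaryDiag_posSemidef U fun i => by by_cases h : 0 ≤ hX.eigenvalues i <;> simp [e, h]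
  · conv_lhs => rw [hX.eq_unitaryDiag]
    rw [← map_mul, trace_unitaryDiag, Complex.ofReal_re, posPartTrace_of_isHermitian hX]
    refine Finset.sum_congr rfl fun i _ => ?_
    by_cases h : 0 ≤ hX.eigenvalues i
    · simp [e, h]
    · simp [e, h, (not_le.mp h).le]

lemma Matrix.IsHermitian.exists_posSemidef_sub {X : Matrix m m ℂ} (hX : X.IsHermitian) :
    ∃ A B : Matrix m m ℂ, A.PosSemidef ∧ B.PosSemidef ∧ X = A - B ∧
      A.trace.re = posPartTrace X := by
  set U := hX.eigenvectorUnitary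
  refine ⟨unitaryDiag U (max hX.eigenvalues 0),
    unitaryDiag U (max hX.eigenvalues 0 - hX.eigenvalues),
    unitaryDiag_posSemidef U le_sup_right, unitaryDiag_posSemidef U (by simp), ?_, ?_⟩
  · rw [← map_sub, sub_sub_cancel]
    exact hX.eq_unitaryDiag
  · rw [trace_unitaryDiag, Complex.ofReal_re, posPartTrace_of_isHermitian hX]
    rfl

lemma posPartTrace_le_re_trace_of_eq_sub {X A B : Matrix m m ℂ} (hA : A.PosSemidef)
    (hB : B.PosSemidef) (hX : X = A - B) : posPartTrace X ≤ A.trace.re := by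
  obtain ⟨P, hP, hP1, hPX⟩ :=
    exists_re_trace_mul_eq_posPartTrace (hX ▸ hA.isHermitian.sub hB.isHermitian)
  rw [← hPX, hX, mul_sub, trace_sub, Complex.sub_re]
  linarith [re_trace_mul_nonneg hP hB, re_trace_mul_le_re_trace hP1 hA]

lemma posPartTrace_map_le {k : Type*} [Fintype k] [DecidableEq k]
    {Φ : Matrix m m ℂ →ₗ[ℂ] Matrix k k ℂ} (hΦ : ∀ A, A.PosSemidef → (Φ A).PosSemidef)
    (htr : ∀ A, (Φ A).trace = A.trace) {X : Matrix m m ℂ} (hX : X.IsHermitian) :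
    posPartTrace (Φ X) ≤ posPartTrace X := by
  obtain ⟨A, B, hA, hB, rfl, hAX⟩ := hX.exists_posSemidef_sub
  rw [← hAX, ← htr A]
  exact posPartTrace_le_re_trace_of_eq_sub (hΦ A hA) (hΦ B hB) (map_sub Φ A B)

lemma traceNorm_unitaryDiag (U : unitaryGroup m ℂ) (d : m → ℝ) :
    traceNorm (unitaryDiag U d) = ∑ i, |d i| := by
  unfold traceNorm
  refine (sum_eigenvalues_unitaryDiag Real.sqrt _ (U := U) (d := d * d) ?_).trans ?_
  · rw [(unitaryDiag_isHermitian U d).eq, map_mul]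
  · simp [Real.sqrt_mul_self_eq_abs]

lemma posPartTrace_eq_half_traceNorm {Z : Matrix m m ℂ} (hZ : Z.IsHermitian)
    (htr : Z.trace = 0) : posPartTrace Z = 1 / 2 * traceNorm Z := by
  obtain ⟨U, d, rfl⟩ : ∃ U d, Z = unitaryDiag U d := ⟨_, _, hZ.eq_unitaryDiag⟩
  have hsum : ∑ i, d i = 0 := by exact_mod_cast (trace_unitaryDiag U d).symm.trans htr
  have hmax : ∀ x : ℝ, max x 0 = (|x| + x) / 2 := fun x => by
    rcases le_total x 0 with h | h <;> simp [h, abs_of_nonpos, abs_of_nonneg]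
  rw [posPartTrace_unitaryDiag, traceNorm_unitaryDiag]
  simp_rw [hmax, ← Finset.sum_div, Finset.sum_add_distrib, hsum]
  ring

lemma posPartTrace_smul_add_smul_one_le {a c : ℝ} (ha : 0 ≤ a) (hc : c ≤ 0)
    {X : Matrix m m ℂ} (hX : X.IsHermitian) :
    posPartTrace ((a : ℂ) • X + (c : ℂ) • 1) ≤ max 0 (a * posPartTrace X + c) := by
  obtain ⟨U, d, rfl⟩ : ∃ U d, X = unitaryDiag U d := ⟨_, _, hX.eq_unitaryDiag⟩
  have hlin : (a : ℂ) • unitaryDiag U d + (c : ℂ) • 1 =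
      unitaryDiag U (a • d + algebraMap ℝ _ c) := by
    rw [map_add, map_smul, AlgHom.commutes, Algebra.algebraMap_eq_smul_one, Complex.coe_smul,
      Complex.coe_smul]
  rw [hlin, posPartTrace_unitaryDiag, posPartTrace_unitaryDiag]
  exact sum_max_mul_add_le ha hc d

end PosPartTrace

lemma Matrix.IsHermitian.sub_ofReal_smul {m : Type*} {ρ σ : Matrix m m ℂ} (hρ : ρ.IsHermitian)
    (hσ : σ.IsHermitian) (γ : ℝ) : (ρ - (γ : ℂ) • σ).IsHermitian :=
  hρ.sub (hσ.smul (Complex.conj_ofReal γ))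

section HockeyStick

variable {m : Type*} [Fintype m] [DecidableEq m]

lemma hsDiv_le_half_traceNorm {γ : ℝ} (hγ : 1 ≤ γ) {ρ σ : Matrix m m ℂ} (hρ : IsDensity ρ)
    (hσ : IsDensity σ) : hsDiv γ ρ σ ≤ 1 / 2 * traceNorm (ρ - σ) := by
  have hZ : (ρ - σ).IsHermitian := hρ.1.isHermitian.sub hσ.1.isHermitian
  obtain ⟨A, B, hA, hB, hAB, hA_tr⟩ := hZ.exists_posSemidef_sub
  have hsplit : ρ - (γ : ℂ) • σ = A - (B + ((γ - 1 : ℝ) : ℂ) • σ) := by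
    rw [← sub_sub, ← hAB]
    push_cast
    module
  have hσγ : (((γ - 1 : ℝ) : ℂ) • σ).PosSemidef :=
    hσ.1.smul (Complex.zero_le_real.mpr (sub_nonneg.mpr hγ))
  rw [← posPartTrace_eq_half_traceNorm hZ (by rw [trace_sub, hρ.2, hσ.2, sub_self]), ← hA_tr]
  exact posPartTrace_le_re_trace_of_eq_sub hA (hB.add hσγ) hsplit

end HockeyStick

section Channels

variable {m k : Type*} [Fintype m] [DecidableEq m] [Fintype k] [DecidableEq k]

lemma IsCPTP.posSemidef_map {Φ : Matrix m m ℂ →ₗ[ℂ] Matrix k k ℂ} (hΦ : IsCPTP Φ)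
    {A : Matrix m m ℂ} (hA : A.PosSemidef) : (Φ A).PosSemidef := by
  have h := hΦ.1 1 (A.submatrix Prod.snd Prod.snd) (hA.submatrix _)
  exact h.submatrix (fun i : k => ((0 : Fin 1), i))

lemma IsDensity.map {Φ : Matrix m m ℂ →ₗ[ℂ] Matrix k k ℂ} (hΦ : IsCPTP Φ) {ρ : Matrix m m ℂ}
    (hρ : IsDensity ρ) : IsDensity (Φ ρ) :=
  ⟨hΦ.posSemidef_map hρ.1, (hΦ.2 ρ).trans hρ.2⟩

lemma hsDiv_map_le {Φ : Matrix m m ℂ →ₗ[ℂ] Matrix k k ℂ} (hΦ : IsCPTP Φ) (γ : ℝ)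
    {ρ σ : Matrix m m ℂ} (hρ : ρ.IsHermitian) (hσ : σ.IsHermitian) :
    hsDiv γ (Φ ρ) (Φ σ) ≤ hsDiv γ ρ σ := by
  rw [hsDiv, hsDiv, ← map_smul, ← map_sub]
  exact posPartTrace_map_le (fun _ => hΦ.posSemidef_map) hΦ.2 (hρ.sub_ofReal_smul hσ γ)

end Channels

section Depolarizing

variable {D : ℕ}

lemma IsDensity.dim_ne_zero {ρ : Matrix (Fin D) (Fin D) ℂ} (hρ : IsDensity ρ) : D ≠ 0 := by
  rintro rfl
  simpa [Matrix.trace] using hρ.2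

lemma depol_apply (q : ℝ) (ρ : Matrix (Fin D) (Fin D) ℂ) :
    depol D q ρ = (1 - (q : ℂ)) • ρ + ((q : ℂ) / D * ρ.trace) • (1 : Matrix (Fin D) (Fin D) ℂ) :=
  rfl

lemma IsDensity.depol {q : ℝ} (hq0 : 0 ≤ q) (hq1 : q ≤ 1) {ρ : Matrix (Fin D) (Fin D) ℂ}
    (hρ : IsDensity ρ) : IsDensity (depol D q ρ) := by
  have hD : (D : ℂ) ≠ 0 := Nat.cast_ne_zero.mpr hρ.dim_ne_zero
  rw [IsDensity, depol_apply, hρ.2, mul_one]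
  constructor
  · have h1 : 1 - (q : ℂ) = ((1 - q : ℝ) : ℂ) := by push_cast; ring
    have h2 : (q : ℂ) / D = ((q / D : ℝ) : ℂ) := by push_cast; ring
    rw [h1, h2]
    exact (hρ.1.smul (Complex.zero_le_real.mpr (by linarith))).add
      (PosSemidef.one.smul (Complex.zero_le_real.mpr (by positivity)))
  · rw [trace_add, trace_smul, trace_smul, trace_one, hρ.2, Fintype.card_fin, smul_eq_mul,
      smul_eq_mul]
    field_simp
    ring

lemma depol_sub_smul_depol (q γ : ℝ) {ρ σ : Matrix (Fin D) (Fin D) ℂ} (hρ : ρ.trace = 1)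
    (hσ : σ.trace = 1) :
    depol D q ρ - (γ : ℂ) • depol D q σ
      = ((1 - q : ℝ) : ℂ) • (ρ - (γ : ℂ) • σ) + ((q * (1 - γ) / D : ℝ) : ℂ) • 1 := by
  rw [depol_apply, depol_apply, hρ, hσ]
  push_cast
  module

lemma hsDiv_depol_le {γ q : ℝ} (hγ : 1 ≤ γ) (hq0 : 0 ≤ q) (hq1 : q ≤ 1)
    {ρ σ : Matrix (Fin D) (Fin D) ℂ} (hρ : IsDensity ρ) (hσ : IsDensity σ) :
    hsDiv γ (depol D q ρ) (depol D q σ) ≤ max 0 ((1 - q) * hsDiv γ ρ σ + q * (1 - γ) / D) := by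
  rw [hsDiv, hsDiv, depol_sub_smul_depol q γ hρ.2 hσ.2]
  exact posPartTrace_smul_add_smul_one_le (by linarith) (mul_one_sub_div_nonpos hq0 hγ D)
    (hρ.1.isHermitian.sub_ofReal_smul hσ.1.isHermitian γ)

variable {ι : Type*} (p : ι → ℝ) (C : ι → (Matrix (Fin D) (Fin D) ℂ →ₗ[ℂ] Matrix (Fin D) (Fin D) ℂ))

noncomputable def depolLayers (l : List ι) :
    Matrix (Fin D) (Fin D) ℂ →ₗ[ℂ] Matrix (Fin D) (Fin D) ℂ :=
  l.foldl (fun acc i => (depol D (p i) ∘ₗ C i) ∘ₗ acc) LinearMap.id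

lemma depolLayered_eq_depolLayers (n : ℕ) (p : Fin n → ℝ)
    (C : Fin n → (Matrix (Fin D) (Fin D) ℂ →ₗ[ℂ] Matrix (Fin D) (Fin D) ℂ)) :
    depolLayered D n p C = depolLayers p C (List.finRange n) :=
  rfl

lemma depolLayers_append_singleton (l : List ι) (i : ι) (τ : Matrix (Fin D) (Fin D) ℂ) :
    depolLayers p C (l ++ [i]) τ = depol D (p i) (C i (depolLayers p C l τ)) := by
  simp [depolLayers, List.foldl_append]

variable {p C}

lemma IsDensity.depolLayers (hp : ∀ i, 0 ≤ p i ∧ p i ≤ 1) (hC : ∀ i, IsCPTP (C i))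
    (l : List ι) {ρ : Matrix (Fin D) (Fin D) ℂ} (hρ : IsDensity ρ) :
    IsDensity (depolLayers p C l ρ) := by
  induction l using List.reverseRecOn with
  | nil => exact hρ
  | append_singleton l i ih =>
    rw [depolLayers_append_singleton]
    exact (ih.map (hC i)).depol (hp i).1 (hp i).2

theorem hsDiv_depolLayers_le {γ : ℝ} (hγ : 1 ≤ γ) (hp : ∀ i, 0 ≤ p i ∧ p i ≤ 1)
    (hC : ∀ i, IsCPTP (C i)) (l : List ι) {ρ σ : Matrix (Fin D) (Fin D) ℂ}
    (hρ : IsDensity ρ) (hσ : IsDensity σ) :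
    hsDiv γ (depolLayers p C l ρ) (depolLayers p C l σ) ≤
      max 0 ((1 - γ) * (1 - (l.map fun i => 1 - p i).prod) / D
        + (l.map fun i => 1 - p i).prod * hsDiv γ ρ σ) := by
  induction l using List.reverseRecOn with
  | nil => simp [depolLayers]
  | append_singleton l i ih =>
    obtain ⟨hq0, hq1⟩ := hp i
    have hρl := hρ.depolLayers hp hC l
    have hσl := hσ.depolLayers hp hC l
    set P := (l.map fun i => 1 - p i).prod
    rw [depolLayers_append_singleton, depolLayers_append_singleton, List.map_append,
      List.prod_append]
    calc _ ≤ max 0 ((1 - p i) * hsDiv γ (C i (depolLayers p C l ρ)) (C i (depolLayers p C l σ))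
            + p i * (1 - γ) / D) :=
          hsDiv_depol_le hγ hq0 hq1 (hρl.map (hC i)) (hσl.map (hC i))
      _ ≤ max 0 ((1 - p i) * hsDiv γ (depolLayers p C l ρ) (depolLayers p C l σ)
            + p i * (1 - γ) / D) := by
          gcongr
          exact hsDiv_map_le (hC i) γ hρl.1.isHermitian hσl.1.isHermitian
      _ ≤ max 0 ((1 - p i) * max 0 ((1 - γ) * (1 - P) / D + P * hsDiv γ ρ σ)
            + p i * (1 - γ) / D) := by
          gcongr
      _ = _ := by
          rw [max_zero_mul_max_zero_add (by linarith) (mul_one_sub_div_nonpos hq0 hγ D)]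
          congr 1
          simp only [List.map_cons, List.map_nil, List.prod_singleton]
          ring

end Depolarizing

theorem hsDiv_depolLayered_general (D n : ℕ) (p : Fin n → ℝ)
    (hp : ∀ i, 0 ≤ p i ∧ p i ≤ 1)
    (C : Fin n → (Matrix (Fin D) (Fin D) ℂ →ₗ[ℂ] Matrix (Fin D) (Fin D) ℂ))
    (hC : ∀ i, IsCPTP (C i))
    (ε κ : ℝ) (hε : 0 ≤ ε)
    (ρ σ : Matrix (Fin D) (Fin D) ℂ) (hρ : IsDensity ρ) (hσ : IsDensity σ)
    (hclose : (1 / 2) * traceNorm (ρ - σ) ≤ κ) :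
    hsDiv (Real.exp ε) (depolLayered D n p C ρ) (depolLayered D n p C σ) ≤
      max 0 ((1 - Real.exp ε) * (1 - ∏ i, (1 - p i)) / D
        + (∏ i, (1 - p i)) * κ) := by
  have hγ : 1 ≤ Real.exp ε := Real.one_le_exp hε
  have hP : 0 ≤ ∏ i, (1 - p i) := Finset.prod_nonneg fun i _ => sub_nonneg.mpr (hp i).2
  rw [Fin.prod_univ_def] at hP ⊢
  rw [depolLayered_eq_depolLayers]
  calc _ ≤ _ := hsDiv_depolLayers_le hγ hp hC (List.finRange n) hρ hσ
    _ ≤ _ := by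
      gcongr
      exact (hsDiv_le_half_traceNorm hγ hρ hσ).trans hclose

/-- Differential privacy of layered circuits with global depolarizing noise. -/
theorem hsDiv_depolLayered (D n : ℕ) (p : Fin n → ℝ)
    (hp : ∀ i, 0 ≤ p i ∧ p i ≤ 1)
    (C : Fin n → (Matrix (Fin D) (Fin D) ℂ →ₗ[ℂ] Matrix (Fin D) (Fin D) ℂ))
    (hC : ∀ i, IsCPTP (C i))
    (ε κ : ℝ) (hε : 0 ≤ ε) (hκ : 0 ≤ κ)
    (ρ σ : Matrix (Fin D) (Fin D) ℂ) (hρ : IsDensity ρ) (hσ : IsDensity σ)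
    (hclose : (1 / 2) * traceNorm (ρ - σ) ≤ κ) :
    hsDiv (Real.exp ε) (depolLayered D n p C ρ) (depolLayered D n p C σ) ≤
      max 0 ((1 - Real.exp ε) * (1 - ∏ i, (1 - p i)) / D
        + (∏ i, (1 - p i)) * κ) :=
  hsDiv_depolLayered_general D n p hp C hC ε κ hε ρ σ hρ hσ hclose
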